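/- arXiv:2512.20430 — 2 statements merged into one kernel-verified Lean document; each statement's English description precedes it below -/
import Mathlib

section
/- On the collision torus of the McGehee-regularized restricted three-body problem, the flow θ̄' = √(2(1−μ)) cos α, α' = (√(2(1−μ))/2) cos α has exactly two circles of equilibria, S⁺ = {α = π/2} and S⁻ = {α = −π/2}, and every non-equilibrium orbit is a heteroclinic connection from a point of S⁻ to a point of S⁺ along which α increases from −π/2 to π/2 while θ̄ − 2α is constant. -/
open Real Filter Set Topology

private lemma lipKcos (k : ℝ) : LipschitzWith ‖k‖₊ (fun x : ℝ => k * Real.cos x) := by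
  apply lipschitzWith_of_nnnorm_deriv_le (Real.differentiable_cos.const_mul k)
  intro x
  have hd : deriv (fun x : ℝ => k * Real.cos x) x = k * (-Real.sin x) := by
    rw [deriv_const_mul _ Real.differentiable_cos.differentiableAt, Real.deriv_cos]
  rw [hd, ← norm_toNNReal, ← norm_toNNReal]
  apply Real.toNNReal_mono
  rw [norm_mul]
  calc ‖k‖ * ‖-Real.sin x‖ ≤ ‖k‖ * 1 := by
        apply mul_le_mul_of_nonneg_left _ (norm_nonneg k)
        rw [norm_neg, Real.norm_eq_abs]
        exact Real.abs_sin_le_one x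
    _ = ‖k‖ := mul_one _

private lemma cos_ne_zero_of_sol (k : ℝ) (α : ℝ → ℝ)
    (hα : ∀ t, HasDerivAt α (k * Real.cos (α t)) t)
    (h0 : Real.cos (α 0) ≠ 0) (t₁ : ℝ) : Real.cos (α t₁) ≠ 0 := by
  intro hz
  apply h0
  have hv : ∀ t : ℝ, LipschitzOnWith ‖k‖₊ (fun x : ℝ => k * Real.cos x) (univ : Set ℝ) :=
    fun _ => (lipKcos k).lipschitzOnWith
  have hmin : min 0 t₁ - 1 < min 0 t₁ := by linarith
  have hmax : max 0 t₁ < max 0 t₁ + 1 := by linarith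
  have ht₁ : t₁ ∈ Ioo (min 0 t₁ - 1) (max 0 t₁ + 1) :=
    ⟨lt_of_lt_of_le hmin (min_le_right 0 t₁), lt_of_le_of_lt (le_max_right 0 t₁) hmax⟩
  have h0m : (0:ℝ) ∈ Ioo (min 0 t₁ - 1) (max 0 t₁ + 1) :=
    ⟨lt_of_lt_of_le hmin (min_le_left 0 t₁), lt_of_le_of_lt (le_max_left 0 t₁) hmax⟩
  have key : Set.EqOn α (fun _ => α t₁) (Ioo (min 0 t₁ - 1) (max 0 t₁ + 1)) := by
    apply ODE_solution_unique_of_mem_Ioo (fun t _ => hv t) ht₁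
    · intro t _; exact ⟨hα t, trivial⟩
    · intro t _
      refine ⟨?_, trivial⟩
      have : HasDerivAt (fun _ : ℝ => α t₁) 0 t := hasDerivAt_const t (α t₁)
      simpa [hz] using this
    · rfl
  rw [key h0m, hz]

private lemma cos_pos_all (k : ℝ) (α : ℝ → ℝ)
    (hα : ∀ t, HasDerivAt α (k * Real.cos (α t)) t)
    (h0 : 0 < Real.cos (α 0)) : ∀ t, 0 < Real.cos (α t) := by
  have hcont : Continuous α := by
    rw [continuous_iff_continuousAt]; exact fun t => (hα t).differentiableAt.continuousAt
  intro t
  rcases lt_trichotomy (Real.cos (α t)) 0 with h | h | h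
  · exfalso
    have hc : ContinuousOn (fun s => Real.cos (α s)) (uIcc 0 t) :=
      (Real.continuous_cos.comp hcont).continuousOn
    have : (0:ℝ) ∈ uIcc (Real.cos (α 0)) (Real.cos (α t)) := by
      rw [Set.mem_uIcc]; right; exact ⟨h.le, h0.le⟩
    obtain ⟨s, _, hs⟩ := intermediate_value_uIcc hc this
    exact cos_ne_zero_of_sol k α hα h0.ne' s hs
  · exact absurd h (cos_ne_zero_of_sol k α hα h0.ne' t)
  · exact h

/-- On any ray where the derivative is eventually at least `d/2 > 0` the solution grows. -/
private lemma growth (α : ℝ → ℝ) (g : ℝ → ℝ) (hα : ∀ t, HasDerivAt α (g t) t)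
    (e : ℝ) (t₀ : ℝ) (hge : ∀ t, t₀ ≤ t → e ≤ g t) :
    ∀ t, t₀ ≤ t → α t₀ + e * (t - t₀) ≤ α t := by
  intro t ht
  have hφ : ∀ s, HasDerivAt (fun u => α u - e * u) (g s - e) s := by
    intro s
    exact ((hα s).sub ((hasDerivAt_id s).const_mul e)).congr_deriv (by ring)
  have hcα : Continuous α := by
    rw [continuous_iff_continuousAt]
    exact fun s => (hα s).differentiableAt.continuousAt
  have hmo : MonotoneOn (fun u => α u - e * u) (Ici t₀) := by
    apply monotoneOn_of_deriv_nonneg (convex_Ici t₀)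
    · exact (hcα.sub (continuous_const.mul continuous_id)).continuousOn
    · intro x hx
      exact (hφ x).differentiableAt.differentiableWithinAt
    · intro x hx
      rw [interior_Ici] at hx
      rw [(hφ x).deriv]
      have := hge x (le_of_lt hx)
      linarith
  have h2 := hmo (self_mem_Ici) (mem_Ici.mpr ht) ht
  simp only at h2
  linarith

private lemma growth_bot (α : ℝ → ℝ) (g : ℝ → ℝ) (hα : ∀ t, HasDerivAt α (g t) t)
    (e : ℝ) (t₀ : ℝ) (hge : ∀ t, t ≤ t₀ → e ≤ g t) :
    ∀ t, t ≤ t₀ → α t + e * (t₀ - t) ≤ α t₀ := by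
  intro t ht
  have hφ : ∀ s, HasDerivAt (fun u => α u - e * u) (g s - e) s := by
    intro s
    exact ((hα s).sub ((hasDerivAt_id s).const_mul e)).congr_deriv (by ring)
  have hcα : Continuous α := by
    rw [continuous_iff_continuousAt]
    exact fun s => (hα s).differentiableAt.continuousAt
  have hmo : MonotoneOn (fun u => α u - e * u) (Iic t₀) := by
    apply monotoneOn_of_deriv_nonneg (convex_Iic t₀)
    · exact (hcα.sub (continuous_const.mul continuous_id)).continuousOn
    · intro x hx
      exact (hφ x).differentiableAt.differentiableWithinAt
    · intro x hx
      rw [interior_Iic] at hx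
      rw [(hφ x).deriv]
      have := hge x (le_of_lt hx)
      linarith
  have h2 := hmo (mem_Iic.mpr ht) (self_mem_Iic) ht
  simp only at h2
  linarith

set_option maxHeartbeats 1000000 in
private lemma main_pos (k : ℝ) (hk : 0 < k) (α : ℝ → ℝ)
    (hα : ∀ t, HasDerivAt α (k * Real.cos (α t)) t)
    (h0 : 0 < Real.cos (α 0)) :
    StrictMono α ∧ ∃ lp lm : ℝ, Real.cos lp = 0 ∧ Real.cos lm = 0 ∧
      Tendsto α atTop (nhds lp) ∧ Tendsto α atBot (nhds lm) ∧ lp = lm + π := by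
  have hpos := cos_pos_all k α hα h0
  have hcont : Continuous α := by
    rw [continuous_iff_continuousAt]; exact fun t => (hα t).differentiableAt.continuousAt
  have hmono : StrictMono α := by
    apply strictMono_of_deriv_pos
    intro t
    rw [(hα t).deriv]
    exact mul_pos hk (hpos t)
  have hπ : (0:ℝ) < π := Real.pi_pos
  -- the trapping interval
  set n : ℤ := ⌊α 0 / π + 1/2⌋ with hn
  set a : ℝ := n * π - π / 2 with ha
  set b : ℝ := n * π + π / 2 with hb
  have hcosa : Real.cos a = 0 := by
    rw [Real.cos_eq_zero_iff]
    exact ⟨n - 1, by push_cast [ha]; ring⟩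
  have hcosb : Real.cos b = 0 := by
    rw [Real.cos_eq_zero_iff]
    exact ⟨n, by push_cast [hb]; ring⟩
  have hfl1 : (n:ℝ) ≤ α 0 / π + 1/2 := Int.floor_le _
  have hfl2 : α 0 / π + 1/2 < n + 1 := Int.lt_floor_add_one _
  have hab1 : a ≤ α 0 := by
    rw [ha]
    have : (n:ℝ) * π ≤ α 0 + π/2 := by
      have := mul_le_mul_of_nonneg_right hfl1 hπ.le
      rw [add_mul, div_mul_cancel₀ _ hπ.ne'] at this
      linarith
    linarith
  have hab2 : α 0 < b := by
    rw [hb]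
    have := mul_lt_mul_of_pos_right hfl2 hπ
    rw [add_mul, add_mul, div_mul_cancel₀ _ hπ.ne'] at this
    linarith
  have hab1' : a < α 0 := by
    rcases eq_or_lt_of_le hab1 with h | h
    · exact absurd (h ▸ hcosa) h0.ne'
    · exact h
  -- the solution stays in (a, b)
  have hub : ∀ t, α t < b := by
    intro t
    by_contra h
    push_neg at h
    have hc : ContinuousOn α (uIcc 0 t) := hcont.continuousOn
    have hbmem : b ∈ uIcc (α 0) (α t) := by
      rw [Set.mem_uIcc]; left; exact ⟨hab2.le, h⟩
    obtain ⟨s, _, hs⟩ := intermediate_value_uIcc hc hbmem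
    exact (hpos s).ne' (by rw [hs]; exact hcosb)
  have hlb : ∀ t, a < α t := by
    intro t
    by_contra h
    push_neg at h
    have hc : ContinuousOn α (uIcc 0 t) := hcont.continuousOn
    have hamem : a ∈ uIcc (α 0) (α t) := by
      rw [Set.mem_uIcc]; right; exact ⟨h, hab1⟩
    obtain ⟨s, _, hs⟩ := intermediate_value_uIcc hc hamem
    exact (hpos s).ne' (by rw [hs]; exact hcosa)
  have hbdda : BddAbove (range α) := ⟨b, by rintro x ⟨t, rfl⟩; exact (hub t).le⟩
  have hbddb : BddBelow (range α) := ⟨a, by rintro x ⟨t, rfl⟩; exact (hlb t).le⟩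
  set lp : ℝ := ⨆ t, α t with hlp
  set lm : ℝ := ⨅ t, α t with hlm
  have hTp : Tendsto α atTop (nhds lp) := tendsto_atTop_ciSup hmono.monotone hbdda
  have hTm : Tendsto α atBot (nhds lm) := tendsto_atBot_ciInf hmono.monotone hbddb
  have hle_lp : ∀ t, α t ≤ lp := fun t => le_ciSup hbdda t
  have hlm_le : ∀ t, lm ≤ α t := fun t => ciInf_le hbddb t
  have hlpb : lp ≤ b := ciSup_le fun t => (hub t).le
  have halm : a ≤ lm := le_ciInf fun t => (hlb t).le
  -- limits are equilibria
  have hcoslp : Real.cos lp = 0 := by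
    by_contra hne
    have hTcos : Tendsto (fun t => k * Real.cos (α t)) atTop (nhds (k * Real.cos lp)) :=
      ((Real.continuous_cos.tendsto lp).comp hTp).const_mul k
    have hclp : 0 < Real.cos lp := by
      rcases (ge_of_tendsto ((Real.continuous_cos.tendsto lp).comp hTp)
        (Eventually.of_forall fun t => (hpos t).le)).lt_or_eq with h | h
      · exact h
      · exact absurd h.symm hne
    set d : ℝ := k * Real.cos lp with hd
    have hdpos : 0 < d := mul_pos hk hclp
    have hev : ∀ᶠ t in atTop, d/2 < k * Real.cos (α t) :=
      hTcos.eventually (eventually_gt_nhds (by linarith))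
    obtain ⟨t₀, ht₀⟩ := hev.exists_forall_of_atTop
    have hgr := growth α (fun t => k * Real.cos (α t)) hα (d/2) t₀
      (fun t ht => (ht₀ t ht).le)
    set T : ℝ := t₀ + (lp - α t₀ + 1) / (d/2) with hT
    have hTge : t₀ ≤ T := by
      rw [hT]
      have h1 : (0:ℝ) < lp - α t₀ + 1 := by have := hle_lp t₀; linarith
      have := div_nonneg h1.le (by linarith : (0:ℝ) ≤ d/2)
      linarith
    have hkey := hgr T hTge
    have hd2 : d/2 ≠ 0 := by positivity
    have hc2 : d/2 * (T - t₀) = lp - α t₀ + 1 := by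
      rw [hT]
      field_simp
      ring
    have hfin := hle_lp T
    linarith
  have hcoslm : Real.cos lm = 0 := by
    by_contra hne
    have hTcos : Tendsto (fun t => k * Real.cos (α t)) atBot (nhds (k * Real.cos lm)) :=
      ((Real.continuous_cos.tendsto lm).comp hTm).const_mul k
    have hclm : 0 < Real.cos lm := by
      rcases (ge_of_tendsto ((Real.continuous_cos.tendsto lm).comp hTm)
        (Eventually.of_forall fun t => (hpos t).le)).lt_or_eq with h | h
      · exact h
      · exact absurd h.symm hne
    set d : ℝ := k * Real.cos lm with hd
    have hdpos : 0 < d := mul_pos hk hclm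
    have hev : ∀ᶠ t in atBot, d/2 < k * Real.cos (α t) :=
      hTcos.eventually (eventually_gt_nhds (by linarith))
    obtain ⟨t₀, ht₀⟩ := hev.exists_forall_of_atBot
    have hgr := growth_bot α (fun t => k * Real.cos (α t)) hα (d/2) t₀
      (fun t ht => (ht₀ t ht).le)
    set T : ℝ := t₀ - (α t₀ - lm + 1) / (d/2) with hT
    have hTle : T ≤ t₀ := by
      rw [hT]
      have h1 : (0:ℝ) < α t₀ - lm + 1 := by have := hlm_le t₀; linarith
      have := div_nonneg h1.le (by linarith : (0:ℝ) ≤ d/2)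
      linarith
    have hkey := hgr T hTle
    have hd2 : d/2 ≠ 0 := by positivity
    have hc2 : d/2 * (t₀ - T) = α t₀ - lm + 1 := by
      rw [hT]
      field_simp
      ring
    have hfin := hlm_le T
    linarith
  -- identify the limits with a and b
  refine ⟨hmono, lp, lm, hcoslp, hcoslm, hTp, hTm, ?_⟩
  obtain ⟨j, hj⟩ := Real.cos_eq_zero_iff.mp hcoslp
  obtain ⟨i, hi⟩ := Real.cos_eq_zero_iff.mp hcoslm
  have hlp_gt_a : a < lp := lt_of_lt_of_le hab1' ((hle_lp 0).trans_eq rfl)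
  have hlm_lt_b : lm < b := lt_of_le_of_lt (hlm_le 0) hab2
  -- translate to integer inequalities
  have hpi2 : (0:ℝ) < π/2 := by linarith
  have hj_eq : j = n := by
    have h1 : ((2*(n:ℝ) - 1) * (π/2)) < (2*(j:ℝ) + 1) * (π/2) := by
      have e1 : (2*(n:ℝ) - 1) * (π/2) = (n:ℝ) * π - π/2 := by ring
      have e2 : (2*(j:ℝ) + 1) * (π/2) = (2*(j:ℝ) + 1) * π / 2 := by ring
      rw [e1, e2, ← hj, ← ha]
      exact hlp_gt_a
    have h2 : (2*(j:ℝ) + 1) * (π/2) ≤ (2*(n:ℝ) + 1) * (π/2) := by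
      have e1 : (2*(n:ℝ) + 1) * (π/2) = (n:ℝ) * π + π/2 := by ring
      have e2 : (2*(j:ℝ) + 1) * (π/2) = (2*(j:ℝ) + 1) * π / 2 := by ring
      rw [e1, e2, ← hj, ← hb]
      exact hlpb
    have h1' : (2*(n:ℝ) - 1) < 2*(j:ℝ) + 1 := lt_of_mul_lt_mul_right h1 hpi2.le
    have h2' : (2*(j:ℝ) + 1) ≤ 2*(n:ℝ) + 1 := le_of_mul_le_mul_right h2 hpi2
    have h1'' : (2*n - 1 : ℤ) < 2*j + 1 := by exact_mod_cast h1'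
    have h2'' : (2*j + 1 : ℤ) ≤ 2*n + 1 := by exact_mod_cast h2'
    omega
  have hi_eq : i = n - 1 := by
    have h1 : ((2*(n:ℝ) - 1) * (π/2)) ≤ (2*(i:ℝ) + 1) * (π/2) := by
      have e1 : (2*(n:ℝ) - 1) * (π/2) = (n:ℝ) * π - π/2 := by ring
      have e2 : (2*(i:ℝ) + 1) * (π/2) = (2*(i:ℝ) + 1) * π / 2 := by ring
      rw [e1, e2, ← hi, ← ha]
      exact halm
    have h2 : (2*(i:ℝ) + 1) * (π/2) < (2*(n:ℝ) + 1) * (π/2) := by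
      have e1 : (2*(n:ℝ) + 1) * (π/2) = (n:ℝ) * π + π/2 := by ring
      have e2 : (2*(i:ℝ) + 1) * (π/2) = (2*(i:ℝ) + 1) * π / 2 := by ring
      rw [e1, e2, ← hi, ← hb]
      exact hlm_lt_b
    have h1' : (2*(n:ℝ) - 1) ≤ 2*(i:ℝ) + 1 := le_of_mul_le_mul_right h1 hpi2
    have h2' : (2*(i:ℝ) + 1) < 2*(n:ℝ) + 1 := lt_of_mul_lt_mul_right h2 hpi2.le
    have h1'' : (2*n - 1 : ℤ) ≤ 2*i + 1 := by exact_mod_cast h1'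
    have h2'' : (2*i + 1 : ℤ) < 2*n + 1 := by exact_mod_cast h2'
    omega
  rw [hj, hi, hj_eq, hi_eq]
  push_cast
  ring

set_option maxHeartbeats 1000000 in
/-- the collision-torus flow θ' = c cos α, α' = (c/2) cos α, c = √(2(1−μ)):
equilibria are exactly {cos α = 0}, θ − 2α is a first integral, and every
non-equilibrium orbit is heteroclinic between consecutive equilibrium circles. -/
theorem stmt12 (μ : ℝ) (hμ : μ ∈ Set.Ico 0 (1/2 : ℝ)) :
    let c := Real.sqrt (2*(1-μ))
    (∀ α : ℝ, (c * Real.cos α = 0 ∧ (c/2) * Real.cos α = 0) ↔ Real.cos α = 0) ∧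
    (∀ θ α : ℝ → ℝ,
      (∀ t, HasDerivAt θ (c * Real.cos (α t)) t) →
      (∀ t, HasDerivAt α ((c/2) * Real.cos (α t)) t) →
      Real.cos (α 0) ≠ 0 →
      (∀ t, θ t - 2*α t = θ 0 - 2*α 0) ∧
      ∃ lp lm : ℝ, Real.cos lp = 0 ∧ Real.cos lm = 0 ∧
        Filter.Tendsto α Filter.atTop (nhds lp) ∧
        Filter.Tendsto α Filter.atBot (nhds lm) ∧
        (0 < Real.cos (α 0) → StrictMono α ∧ lp = lm + Real.pi) ∧
        (Real.cos (α 0) < 0 → StrictAnti α ∧ lp = lm - Real.pi)) := by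
  intro c
  have hc : 0 < c := by
    apply Real.sqrt_pos.mpr
    have := hμ.2
    norm_num at this ⊢
    linarith
  constructor
  · intro α
    constructor
    · rintro ⟨h1, -⟩
      rcases mul_eq_zero.mp h1 with h | h
      · exact absurd h hc.ne'
      · exact h
    · intro h
      simp [h]
  · intro θ α hθ hα hne
    constructor
    · -- first integral
      have hf : ∀ t, HasDerivAt (fun t => θ t - 2 * α t) 0 t := by
        intro t
        have h1 := (hθ t).sub ((hα t).const_mul 2)
        refine h1.congr_deriv ?_
        ring
      intro t
      exact is_const_of_deriv_eq_zero (fun s => (hf s).differentiableAt)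
        (fun s => (hf s).deriv) t 0
    · have hk : 0 < c / 2 := by linarith
      rcases hne.lt_or_gt with hneg | hpos
      · -- cos (α 0) < 0 : reflect
        set β : ℝ → ℝ := fun t => π - α t with hβdef
        have hβ : ∀ t, HasDerivAt β ((c/2) * Real.cos (β t)) t := by
          intro t
          have h1 : HasDerivAt β (-(c/2 * Real.cos (α t))) t := (hα t).const_sub π
          convert h1 using 1
          rw [hβdef]
          simp only
          rw [Real.cos_pi_sub]
          ring
        have hβ0 : 0 < Real.cos (β 0) := by
          rw [hβdef]; simp only; rw [Real.cos_pi_sub]; linarith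
        obtain ⟨hmβ, Lp, Lm, hcLp, hcLm, hTp, hTm, hLeq⟩ := main_pos (c/2) hk β hβ hβ0
        refine ⟨π - Lp, π - Lm, ?_, ?_, ?_, ?_, ?_, ?_⟩
        · rw [Real.cos_pi_sub, hcLp, neg_zero]
        · rw [Real.cos_pi_sub, hcLm, neg_zero]
        · have : Tendsto (fun t => π - β t) atTop (nhds (π - Lp)) :=
            tendsto_const_nhds.sub hTp
          convert this using 2 with t
          rw [hβdef]; ring
        · have : Tendsto (fun t => π - β t) atBot (nhds (π - Lm)) :=
            tendsto_const_nhds.sub hTm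
          convert this using 2 with t
          rw [hβdef]; ring
        · intro h; exact absurd h (not_lt.mpr hneg.le)
        · intro _
          constructor
          · intro s t hst
            have := hmβ hst
            rw [hβdef] at this
            simp only at this
            linarith
          · rw [hLeq]; ring
      · obtain ⟨hm, lp, lm, h1, h2, h3, h4, h5⟩ := main_pos (c/2) hk α hα hpos
        exact ⟨lp, lm, h1, h2, h3, h4, fun _ => ⟨hm, h5⟩,
          fun h => absurd h (not_lt.mpr hpos.le)⟩
end

section
/- For μ = 0 and any Θ₀ ∈ [−√2, √2], the stable set of parabolic infinity for the rotating Kepler Hamiltonian is the graph {(r̂, θ̂, R̂, Θ̂) : r̂ > Θ₀²/2, R̂ = √(2r̂ − Θ₀²)/r̂, Θ̂ = Θ₀}. That is: a solution of the rotating Kepler equations with angular momentum Θ₀ and two-body energy 0 satisfies r̂(t) → ∞ and R̂(t) → 0 as t → +∞ with R̂(t) > 0, if and only if at every time R̂ = √(2r̂ − Θ₀²)/r̂. -/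
/-- for μ = 0, the stable set of parabolic infinity of the rotating Kepler
problem with angular momentum Θ₀ is the graph R = √(2r − Θ₀²)/r. -/
theorem stmt13 (Θ₀ : ℝ) (hΘ : Θ₀ ∈ Set.Icc (-Real.sqrt 2) (Real.sqrt 2))
    (r θ R : ℝ → ℝ)
    (hr : ∀ t, 0 < r t)
    (h1 : ∀ t, HasDerivAt r (R t) t)
    (h2 : ∀ t, HasDerivAt θ (Θ₀/(r t)^2 - 1) t)
    (h3 : ∀ t, HasDerivAt R (Θ₀^2/(r t)^3 - 1/(r t)^2) t)
    (hE : ∀ t, (R t)^2/2 + Θ₀^2/(2*(r t)^2) - 1/(r t) = 0) :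
    (Filter.Tendsto r Filter.atTop Filter.atTop ∧
      Filter.Tendsto R Filter.atTop (nhds 0) ∧ (∀ t, 0 < R t)) ↔
    (∀ t, R t = Real.sqrt (2*(r t) - Θ₀^2) / r t) := by
  -- the energy relation in product form
  have hsq : ∀ t, R t ^ 2 * (r t) ^ 2 = 2 * r t - Θ₀ ^ 2 := by
    intro t
    have hrne : r t ≠ 0 := (hr t).ne'
    have key : (R t ^ 2 / 2 + Θ₀ ^ 2 / (2 * (r t) ^ 2) - 1 / (r t)) * (2 * (r t) ^ 2)
        = R t ^ 2 * (r t) ^ 2 + Θ₀ ^ 2 - 2 * r t := by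
      field_simp
    have h0 : (0:ℝ) = R t ^ 2 * (r t) ^ 2 + Θ₀ ^ 2 - 2 * r t := by
      rw [← key, hE t, zero_mul]
    linarith
  have hnn : ∀ t, 0 ≤ 2 * r t - Θ₀ ^ 2 := by
    intro t
    rw [← hsq t]; positivity
  constructor
  · rintro ⟨-, -, hRpos⟩ t
    have hdiv : R t ^ 2 = (2 * r t - Θ₀ ^ 2) / (r t) ^ 2 := by
      rw [← hsq t, mul_div_assoc, div_self (pow_ne_zero 2 (hr t).ne'), mul_one]
    calc R t = Real.sqrt (R t ^ 2) := (Real.sqrt_sq (hRpos t).le).symm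
      _ = Real.sqrt ((2 * r t - Θ₀ ^ 2) / (r t) ^ 2) := by rw [hdiv]
      _ = Real.sqrt (2 * r t - Θ₀ ^ 2) / Real.sqrt ((r t) ^ 2) := Real.sqrt_div (hnn t) _
      _ = Real.sqrt (2 * (r t) - Θ₀ ^ 2) / r t := by rw [Real.sqrt_sq (hr t).le]
  · intro hgraph
    -- nonnegativity of R
    have hRnonneg : ∀ t, 0 ≤ R t := by
      intro t; rw [hgraph t]; exact div_nonneg (Real.sqrt_nonneg _) (hr t).le
    -- strict positivity of 2 r - Θ₀²
    have hpos : ∀ t, 0 < 2 * r t - Θ₀ ^ 2 := by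
      intro t₀
      rcases (hnn t₀).lt_or_eq with h | h
      · exact h
      exfalso
      have hr0 : r t₀ = Θ₀ ^ 2 / 2 := by linarith
      have hRt0 : R t₀ = 0 := by
        rw [hgraph t₀, ← h, Real.sqrt_zero, zero_div]
      by_cases hΘ0 : Θ₀ = 0
      · rw [hΘ0] at hr0; norm_num at hr0
        exact absurd hr0 (hr t₀).ne'
      · -- the derivative of R at t₀ is positive, contradicting R ≥ 0, R t₀ = 0
        have hΘsq : 0 < Θ₀ ^ 2 := by positivity
        have hd : 0 < Θ₀ ^ 2 / (r t₀) ^ 3 - 1 / (r t₀) ^ 2 := by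
          rw [hr0]
          rw [div_sub_div _ _ (by positivity) (by positivity), lt_div_iff₀ (by positivity)]
          ring_nf
          nlinarith [pow_pos hΘsq 2, pow_pos hΘsq 3]
        have hslope := hasDerivAt_iff_tendsto_slope.mp (h3 t₀)
        have hev : ∀ᶠ x in nhdsWithin t₀ {t₀}ᶜ, 0 < slope R t₀ x :=
          hslope.eventually (eventually_gt_nhds hd)
        have hev' : ∀ᶠ x in nhdsWithin t₀ (Set.Iio t₀), 0 < slope R t₀ x :=
          hev.filter_mono (nhdsWithin_mono _ (fun x hx => ne_of_lt hx))
        obtain ⟨x, hx0, hxlt⟩ := (hev'.and self_mem_nhdsWithin).exists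
        rw [slope_def_field, hRt0, sub_zero] at hx0
        have hxneg : x - t₀ < 0 := sub_neg.mpr hxlt
        have : R x / (x - t₀) ≤ 0 :=
          div_nonpos_of_nonneg_of_nonpos (hRnonneg x) hxneg.le
        linarith
    have hRpos : ∀ t, 0 < R t := by
      intro t
      rw [hgraph t]
      exact div_pos (Real.sqrt_pos.mpr (hpos t)) (hr t)
    -- r is monotone
    have hmono : Monotone r := by
      apply StrictMono.monotone
      apply strictMono_of_deriv_pos
      intro x
      rw [(h1 x).deriv]
      exact hRpos x
    have hcont : Continuous r :=
      continuous_iff_continuousAt.mpr fun x => (h1 x).continuousAt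
    -- r is unbounded
    have hub : ∀ b, ∃ a, b ≤ r a := by
      intro b
      by_contra hcon
      push_neg at hcon
      have hbdd : BddAbove (Set.range r) := by
        refine ⟨b, ?_⟩
        rintro y ⟨a, rfl⟩
        exact (hcon a).le
      set L := ⨆ t, r t with hL
      have hLtend : Filter.Tendsto r Filter.atTop (nhds L) := tendsto_atTop_ciSup hmono hbdd
      have hL0 : r 0 ≤ L := le_ciSup hbdd 0
      have hLpos : 0 < L := lt_of_lt_of_le (hr 0) hL0
      have hcpos : 0 < 2 * L - Θ₀ ^ 2 := lt_of_lt_of_le (hpos 0) (by linarith)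
      set c := Real.sqrt (2 * L - Θ₀ ^ 2) / L with hc_def
      have hc : 0 < c := div_pos (Real.sqrt_pos.mpr hcpos) hLpos
      have hRtend : Filter.Tendsto R Filter.atTop (nhds c) := by
        have h' : Filter.Tendsto (fun t => Real.sqrt (2 * r t - Θ₀ ^ 2) / r t)
            Filter.atTop (nhds c) :=
          (((hLtend.const_mul 2).sub_const (Θ₀ ^ 2)).sqrt).div hLtend hLpos.ne'
        exact h'.congr (fun t => (hgraph t).symm)
      have hev : ∀ᶠ t in Filter.atTop, c / 2 ≤ R t :=
        hRtend.eventually (eventually_ge_nhds (by linarith))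
      obtain ⟨T, hT⟩ := Filter.eventually_atTop.mp hev
      -- g t = r t - (c/2) t is monotone on [T, ∞)
      have hg : MonotoneOn (fun t => r t - c / 2 * t) (Set.Ici T) := by
        apply monotoneOn_of_deriv_nonneg (convex_Ici T)
        · exact (hcont.sub (continuous_const.mul continuous_id)).continuousOn
        · intro x _
          exact ((h1 x).sub ((hasDerivAt_id x).const_mul (c / 2))).differentiableAt.differentiableWithinAt
        · intro x hx
          rw [interior_Ici] at hx
          have hdx : HasDerivAt (fun t => r t - c / 2 * t) (R x - c / 2 * 1) x :=
            (h1 x).sub ((hasDerivAt_id x).const_mul (c / 2))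
          rw [hdx.deriv]
          have := hT x hx.le
          linarith
      -- derive a contradiction by going far enough in time
      have hbT : r T < b := hcon T
      have hnn2 : 0 ≤ 2 * (b - r T) / c := div_nonneg (by linarith) hc.le
      have hTle : T ≤ T + 2 * (b - r T) / c + 1 := by linarith
      have hmg := hg Set.self_mem_Ici (Set.mem_Ici.mpr hTle) hTle
      simp only at hmg
      have e1 : c / 2 * (T + 2 * (b - r T) / c + 1) = c / 2 * T + (b - r T) + c / 2 := by
        field_simp
      rw [e1] at hmg
      have hbig : b < r (T + 2 * (b - r T) / c + 1) := by linarith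
      exact absurd (hcon _) (not_lt.mpr hbig.le)
    have hrtop : Filter.Tendsto r Filter.atTop Filter.atTop :=
      Filter.tendsto_atTop_atTop_of_monotone hmono hub
    refine ⟨hrtop, ?_, hRpos⟩
    -- R → 0
    have hsr : Filter.Tendsto (fun t => Real.sqrt (r t)) Filter.atTop Filter.atTop := by
      apply Filter.tendsto_atTop.mpr
      intro b
      filter_upwards [hrtop.eventually_ge_atTop (b ^ 2)] with t ht
      calc b ≤ |b| := le_abs_self b
        _ = Real.sqrt (b ^ 2) := (Real.sqrt_sq_eq_abs b).symm
        _ ≤ Real.sqrt (r t) := Real.sqrt_le_sqrt ht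
    have hgtend : Filter.Tendsto (fun t => Real.sqrt 2 / Real.sqrt (r t))
        Filter.atTop (nhds 0) :=
      Filter.Tendsto.div_atTop tendsto_const_nhds hsr
    apply squeeze_zero hRnonneg _ hgtend
    intro t
    rw [hgraph t]
    have hsrpos : 0 < Real.sqrt (r t) := Real.sqrt_pos.mpr (hr t)
    have h1' : Real.sqrt (2 * r t - Θ₀ ^ 2) ≤ Real.sqrt (2 * r t) :=
      Real.sqrt_le_sqrt (by nlinarith [sq_nonneg Θ₀])
    have h2' : Real.sqrt (2 * r t) / r t = Real.sqrt 2 / Real.sqrt (r t) := by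
      rw [Real.sqrt_mul (by norm_num : (0:ℝ) ≤ 2), div_eq_div_iff (hr t).ne' hsrpos.ne',
        mul_assoc, Real.mul_self_sqrt (hr t).le]
    calc Real.sqrt (2 * r t - Θ₀ ^ 2) / r t ≤ Real.sqrt (2 * r t) / r t :=
          div_le_div_of_nonneg_right h1' (hr t).le |>.trans_eq rfl
      _ = Real.sqrt 2 / Real.sqrt (r t) := h2'
end
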